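/- (Theorem 2.5 (iii), pointwise form) Assume G is conserved by X. If a differentiable curve x on an interval solves the geometrically dissipated system and x(t₀) ∉ Inv for some t₀ in that interval, then the derivative of G∘x at t₀ is strictly negative. -/

import Mathlib

open scoped RealInnerProductSpace BigOperators
open Filter Topology

/-- `Σ^{(a₁,…,a_r)}_{(b₁,…,b_s)}`: the `r × s` real matrix whose `(i,j)` entry is `⟪b j, a i⟫`. -/
noncomputable def sigmaMat {E : Type*} [NormedAddCommGroup E] [InnerProductSpace ℝ E]
    {r s : ℕ} (a : Fin r → E) (b : Fin s → E) : Matrix (Fin r) (Fin s) ℝ :=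
  Matrix.of fun i j => ⟪b j, a i⟫

/-- The standard control vector `v₀(w₁,…,w_{k+1},u)`: there are `k+1` vectors `w`
(`k+1 ≥ 1` encodes the requirement that the number of `w`-vectors is at least one).
With `0`-indexing, the sign `(-1)^(i+k+1)` below is the paper's `(-1)^{i+k+1}` for
`1`-indexed `i` and `k+1` vectors. -/
noncomputable def stdControl {E : Type*} [NormedAddCommGroup E] [InnerProductSpace ℝ E]
    {k : ℕ} (w : Fin (k + 1) → E) (u : E) : E :=
  (∑ i : Fin (k + 1),
      ((-1 : ℝ) ^ ((i : ℕ) + k + 1) *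
        (sigmaMat w (Fin.snoc (w ∘ i.succAbove) u)).det) • w i) +
    (sigmaMat w w).det • u

/-- The family of gradients `(∇F₁(x),…,∇F_{k+1}(x),∇G(x))`. -/
noncomputable def gradFam {E : Type*} [NormedAddCommGroup E] [InnerProductSpace ℝ E]
    [FiniteDimensional ℝ E] {k : ℕ} (F : Fin (k + 1) → E → ℝ) (G : E → ℝ) (x : E) :
    Fin (k + 1 + 1) → E :=
  Fin.snoc (fun i => gradient (F i) x) (gradient G x)

/-- The standard control vector field `x ↦ v₀(∇F₁(x),…,∇F_{k+1}(x),∇G(x))`. -/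
noncomputable def v0Field {E : Type*} [NormedAddCommGroup E] [InnerProductSpace ℝ E]
    [FiniteDimensional ℝ E] {k : ℕ} (F : Fin (k + 1) → E → ℝ) (G : E → ℝ) (x : E) : E :=
  stdControl (fun i => gradient (F i) x) (gradient G x)

/-- `det Σ^{(∇F₁(x),…,∇F_{k+1}(x),∇G(x))}_{(∇F₁(x),…,∇F_{k+1}(x),∇G(x))}`. -/
noncomputable def gramDetFG {E : Type*} [NormedAddCommGroup E] [InnerProductSpace ℝ E]
    [FiniteDimensional ℝ E] {k : ℕ} (F : Fin (k + 1) → E → ℝ) (G : E → ℝ) (x : E) : ℝ :=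
  (sigmaMat (gradFam F G x) (gradFam F G x)).det

/-- The set `Inv = {x | det Σ^{(∇F(x),∇G(x))}_{(∇F(x),∇G(x))} = 0}`. -/
def invSet {E : Type*} [NormedAddCommGroup E] [InnerProductSpace ℝ E]
    [FiniteDimensional ℝ E] {k : ℕ} (F : Fin (k + 1) → E → ℝ) (G : E → ℝ) : Set E :=
  {x | gramDetFG F G x = 0}

/-! Since `G` is conserved by `X`, the derivative of `G ∘ x` is `-⟪∇G, v₀⟫`. The control vector
`v₀(w, u)` is built so that `⟪u, v₀(w, u)⟫` is the Laplace expansion, along the last row, of the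
Gram determinant of `(w, u)`; Gram determinants are nonnegative, and off `Inv` this one is
nonzero. -/

theorem Fin.snoc_comp_succAbove_castSucc {α : Type*} {n : ℕ} (w : Fin (n + 1) → α) (u : α)
    (i : Fin (n + 1)) :
    Fin.snoc w u ∘ i.castSucc.succAbove = Fin.snoc (w ∘ i.succAbove) u := by
  funext j
  refine Fin.lastCases ?_ (fun j => ?_) j
  · simp [Fin.succAbove_of_le_castSucc _ _ (Fin.castSucc_le_castSucc_iff.2 (Fin.le_last i))]
  · simp [Fin.castSucc_succAbove_castSucc]

section

variable {E : Type*} [NormedAddCommGroup E] [InnerProductSpace ℝ E]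

theorem sigmaMat_submatrix {r s r' s' : ℕ} (a : Fin r → E) (b : Fin s → E)
    (f : Fin r' → Fin r) (g : Fin s' → Fin s) :
    (sigmaMat a b).submatrix f g = sigmaMat (a ∘ f) (b ∘ g) :=
  rfl

theorem sigmaMat_self_eq_gram {n : ℕ} (v : Fin n → E) : sigmaMat v v = Matrix.gram ℝ v := by
  ext i j
  exact real_inner_comm _ _

theorem det_sigmaMat_self_nonneg {n : ℕ} (v : Fin n → E) : 0 ≤ (sigmaMat v v).det :=
  sigmaMat_self_eq_gram v ▸ (Matrix.posSemidef_gram ℝ v).det_nonneg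

theorem inner_stdControl {k : ℕ} (w : Fin (k + 1) → E) (u : E) :
    ⟪u, stdControl w u⟫ = (sigmaMat (Fin.snoc w u) (Fin.snoc w u)).det := by
  rw [Matrix.det_succ_row _ (Fin.last _), Fin.sum_univ_castSucc]
  simp only [stdControl, inner_add_right, inner_sum, real_inner_smul_right, sigmaMat_submatrix,
    Fin.succAbove_last, Fin.snoc_comp_castSucc, Fin.snoc_comp_succAbove_castSucc]
  congr 1
  · refine Finset.sum_congr rfl fun i _ => ?_
    simp only [sigmaMat, Matrix.of_apply, Fin.snoc_castSucc, Fin.snoc_last, Fin.val_castSucc,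
      Fin.val_last, real_inner_comm u]
    ring
  · simp only [sigmaMat, Matrix.of_apply, Fin.snoc_last, Fin.val_last, ← two_mul, pow_mul]
    norm_num [mul_comm]

end

section

variable {E : Type*} [NormedAddCommGroup E] [InnerProductSpace ℝ E] [FiniteDimensional ℝ E]
  {k : ℕ} (F : Fin (k + 1) → E → ℝ) (G : E → ℝ)

theorem inner_gradient_v0Field (y : E) : ⟪gradient G y, v0Field F G y⟫ = gramDetFG F G y :=
  inner_stdControl _ _

theorem gramDetFG_pos_of_not_mem_invSet {y : E} (hy : y ∉ invSet F G) : 0 < gramDetFG F G y :=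
  (det_sigmaMat_self_nonneg _).lt_of_ne' hy

end

theorem deriv_G_comp_neg_of_not_mem_inv_general
    {E : Type*} [NormedAddCommGroup E] [InnerProductSpace ℝ E]
    [FiniteDimensional ℝ E] {k : ℕ} (F : Fin (k + 1) → E → ℝ) (G : E → ℝ) (X : E → E)
    (hG : ContDiff ℝ 1 G)
    (hcons : ∀ y : E, ⟪gradient G y, X y⟫ = 0)
    (I : Set ℝ) (x : ℝ → E)
    (hx : ∀ t ∈ I, HasDerivAt x (X (x t) - v0Field F G (x t)) t)
    (t₀ : ℝ) (ht₀ : t₀ ∈ I) (hnot : x t₀ ∉ invSet F G) :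
    deriv (fun s => G (x s)) t₀ < 0 := by
  have hGx : HasGradientAt G (gradient G (x t₀)) (x t₀) :=
    (hG.differentiable one_ne_zero (x t₀)).hasGradientAt
  have hGx_comp : HasDerivAt (fun s => G (x s))
      ⟪gradient G (x t₀), X (x t₀) - v0Field F G (x t₀)⟫ t₀ :=
    hGx.hasFDerivAt.comp_hasDerivAt t₀ (hx t₀ ht₀)
  rw [hGx_comp.deriv, inner_sub_right, hcons, inner_gradient_v0Field, zero_sub, neg_neg_iff_pos]
  exact gramDetFG_pos_of_not_mem_invSet F G hnot

/-- Theorem 2.5 (iii), pointwise form: along a solution of the geometrically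
dissipated system, at any time where the solution is outside `Inv` the derivative of
`G ∘ x` is strictly negative. -/
theorem deriv_G_comp_neg_of_not_mem_inv
    {E : Type*} [NormedAddCommGroup E] [InnerProductSpace ℝ E]
    [FiniteDimensional ℝ E] {k : ℕ} (F : Fin (k + 1) → E → ℝ) (G : E → ℝ) (X : E → E)
    (hF : ∀ i, ContDiff ℝ 1 (F i)) (hG : ContDiff ℝ 1 G)
    (hcons : ∀ y : E, ⟪gradient G y, X y⟫ = 0)
    (I : Set ℝ) (hI : I.OrdConnected) (x : ℝ → E)
    (hx : ∀ t ∈ I, HasDerivAt x (X (x t) - v0Field F G (x t)) t)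
    (t₀ : ℝ) (ht₀ : t₀ ∈ I) (hnot : x t₀ ∉ invSet F G) :
    deriv (fun s => G (x s)) t₀ < 0 :=
  deriv_G_comp_neg_of_not_mem_inv_general F G X hG hcons I x hx t₀ ht₀ hnot
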